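/- In the I-GMANOVA setup, let R̂₁ = K⁻¹(S_c + S_c^{1/2} P_{A₁}^⊥ Z_{W1} P_{C†} Z_{W1}† P_{A₁}^⊥ S_c^{1/2}) (which is Hermitian positive definite), let Γ̂¹ = (A† R̂₁⁻¹ A)⁻¹ be partitioned into 2×2 blocks conformally with (t, r), and let Γ̂₂₂¹ be its lower-right r×r block. Then K · P_{A₀}^⊥ S_c^{-1/2} E_r Γ̂₂₂¹ E_r† S_c^{-1/2} P_{A₀}^⊥ = P_{A₁} − P_{A₀}; consequently the Wald statistic Tr[Z_{W1}† (K P_{A₀}^⊥ S_c^{-1/2} E_r Γ̂₂₂¹ E_r† S_c^{-1/2} P_{A₀}^⊥) Z_{W1} P_{C†}] equals the two-step GLR statistic Tr[Z_{W1}† (P_{A₁} − P_{A₀}) Z_{W1} P_{C†}] (statistical equivalence of the Wald test and the 2S-GLRT). -/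

import Mathlib

open Matrix
open scoped ComplexOrder

noncomputable section

/-- Orthogonal projector onto the column space of `F`: `P_F = F (Fᴴ F)⁻¹ Fᴴ`. -/
def proj {n m : Type*} [Fintype n] [Fintype m] [DecidableEq n] [DecidableEq m]
    (F : Matrix n m ℂ) : Matrix n n ℂ :=
  F * (Fᴴ * F)⁻¹ * Fᴴ

/-- Complementary projector `P_F^⊥ = I - P_F`. -/
def projPerp {n m : Type*} [Fintype n] [Fintype m] [DecidableEq n] [DecidableEq m]
    (F : Matrix n m ℂ) : Matrix n n ℂ :=
  1 - proj F

/-- The old Mathlib `Matrix.PosSemidef.sqrt` (removed), with its original definition. -/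
def posSemidefSqrt {n 𝕜 : Type*} [Fintype n] [DecidableEq n] [RCLike 𝕜] {A : Matrix n n 𝕜}
    (hA : A.PosSemidef) : Matrix n n 𝕜 :=
  hA.1.eigenvectorUnitary.1 * diagonal ((↑) ∘ (√·) ∘ hA.1.eigenvalues) *
    (star hA.1.eigenvectorUnitary : Matrix n n 𝕜)

/-! Since `P_{A₁}^⊥ A₁ = 0`, the matrix `W = I + P_{A₁}^⊥ Z_{W1} P_{C†} Z_{W1}ᴴ P_{A₁}^⊥` fixes
`A₁`, and `K R̂₁ = S_c^{1/2} W S_c^{1/2}`; hence `Aᴴ R̂₁⁻¹ A = K A₁ᴴ A₁`, i.e.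
`Γ̂¹ = K⁻¹ (A₁ᴴ A₁)⁻¹`. For `X = [X₀ B]` of full column rank put `Y = P_{X₀}^⊥ B`. The Schur
complement of `X₀ᴴ X₀` in `Xᴴ X` is `Yᴴ Y`, so the lower-right block of `(Xᴴ X)⁻¹` is `(Yᴴ Y)⁻¹`;
and the column operation `B ↦ B - P_{X₀} B` does not change `P_X` and makes the two blocks
orthogonal, so `P_X = P_{X₀} + P_Y`. For `X = A₁ = [A₀ S_c^{-1/2} E_r]` both sides of the identity
are therefore `P_Y`. -/

lemma posSemidefSqrt_eq_cfc {n 𝕜 : Type*} [Fintype n] [DecidableEq n] [RCLike 𝕜]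
    {A : Matrix n n 𝕜} (hA : A.PosSemidef) : posSemidefSqrt hA = cfc Real.sqrt A := by
  rw [hA.1.cfc_eq]
  rfl

lemma posSemidefSqrt_mul_self {n 𝕜 : Type*} [Fintype n] [DecidableEq n] [RCLike 𝕜]
    {A : Matrix n n 𝕜} (hA : A.PosSemidef) : posSemidefSqrt hA * posSemidefSqrt hA = A := by
  rw [posSemidefSqrt_eq_cfc, ← cfc_mul Real.sqrt Real.sqrt A]
  conv_rhs => rw [← cfc_id ℝ A hA.1]
  refine cfc_congr fun x hx => ?_
  rw [hA.1.spectrum_real_eq_range_eigenvalues] at hx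
  obtain ⟨i, rfl⟩ := hx
  exact Real.mul_self_sqrt (hA.eigenvalues_nonneg i)

lemma isHermitian_posSemidefSqrt {n 𝕜 : Type*} [Fintype n] [DecidableEq n] [RCLike 𝕜]
    {A : Matrix n n 𝕜} (hA : A.PosSemidef) : (posSemidefSqrt hA).IsHermitian := by
  rw [posSemidefSqrt_eq_cfc]
  exact cfc_predicate Real.sqrt A

lemma inv_smul_of_ne_zero {n 𝕜 : Type*} [Fintype n] [DecidableEq n] [Field 𝕜] {k : 𝕜}
    (hk : k ≠ 0) (A : Matrix n n 𝕜) : (k • A)⁻¹ = k⁻¹ • A⁻¹ := by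
  by_cases hA : IsUnit A.det
  · let := invertibleOfNonzero hk
    rw [inv_smul A k hA, invOf_eq_inv]
  · have hkA : ¬IsUnit (k • A).det := by
      rw [det_smul, IsUnit.mul_iff]
      exact fun h => hA h.2
    rw [nonsing_inv_apply_not_isUnit _ hA, nonsing_inv_apply_not_isUnit _ hkA, smul_zero]

lemma conjTranspose_mul_inv_conj_mul_of_mul_eq {n m 𝕜 : Type*} [Fintype n] [DecidableEq n]
    [Field 𝕜] [StarRing 𝕜] {S W : Matrix n n 𝕜} (hS : S.IsHermitian) (hW : IsUnit W.det)
    {A : Matrix n m 𝕜} (hWA : W * (S⁻¹ * A) = S⁻¹ * A) :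
    Aᴴ * (S * W * S)⁻¹ * A = (S⁻¹ * A)ᴴ * (S⁻¹ * A) := by
  have hWA' : W⁻¹ * (S⁻¹ * A) = S⁻¹ * A := by
    conv_lhs => rw [← hWA, ← Matrix.mul_assoc, nonsing_inv_mul W hW, Matrix.one_mul]
  rw [Matrix.mul_inv_rev, Matrix.mul_inv_rev, conjTranspose_mul, hS.inv.eq]
  simp only [Matrix.mul_assoc, hWA']

lemma Matrix.PosDef.mul_mul_of_isHermitian {n 𝕜 : Type*} [Fintype n] [DecidableEq n] [RCLike 𝕜]
    {S W : Matrix n n 𝕜} (hS : S.IsHermitian) (hSu : IsUnit S) (hW : W.PosDef) :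
    (S * W * S).PosDef := by
  simpa only [hS.eq] using hW.conjTranspose_mul_mul_same (mulVec_injective_of_isUnit hSu)

lemma injective_mulVec_submatrix {n m p R : Type*} [Fintype m] [Fintype p] [CommSemiring R]
    {F : Matrix n m R} (e : p ≃ m) (hF : Function.Injective F.mulVec) :
    Function.Injective (F.submatrix id e).mulVec := by
  have hmul (v : p → R) : F.submatrix id e *ᵥ v = F *ᵥ (v ∘ e.symm) :=
    submatrix_mulVec_equiv F v id e
  intro v w h
  rw [hmul, hmul] at h
  exact e.symm.surjective.injective_comp_right (hF h)

lemma injective_mulVec_of_fromCols_left {n p q R : Type*} [Fintype p] [Fintype q] [CommSemiring R]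
    {X₀ : Matrix n p R} {B : Matrix n q R} (h : Function.Injective (fromCols X₀ B).mulVec) :
    Function.Injective X₀.mulVec := by
  intro v w hvw
  have := @h (Sum.elim v 0) (Sum.elim w 0) (by simp [hvw])
  exact funext fun i => by simpa using congrFun this (Sum.inl i)

lemma injective_mulVec_of_fromCols_right {n p q R : Type*} [Fintype p] [Fintype q]
    [CommSemiring R] {X₀ : Matrix n p R} {B : Matrix n q R}
    (h : Function.Injective (fromCols X₀ B).mulVec) : Function.Injective B.mulVec := by
  intro v w hvw
  have := @h (Sum.elim 0 v) (Sum.elim 0 w) (by simp [hvw])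
  exact funext fun i => by simpa using congrFun this (Sum.inr i)

lemma injective_mulVec_of_val_eq_val {R : Type*} [Semiring R] {N J : ℕ} (h : J ≤ N) :
    Function.Injective
      (Matrix.of fun (i : Fin N) (j : Fin J) => if (i : ℕ) = (j : ℕ) then (1 : R) else 0).mulVec :=
  fun v w hvw => funext fun j => by
    simpa [mulVec, dotProduct, Fin.val_inj] using congrFun hvw (Fin.castLE h j)

section Projection

variable {n m : Type*} [Fintype n] [DecidableEq n] [Fintype m] [DecidableEq m]

lemma isHermitian_proj (F : Matrix n m ℂ) : (proj F).IsHermitian := by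
  rw [IsHermitian, proj, conjTranspose_mul, conjTranspose_mul, conjTranspose_nonsing_inv,
    conjTranspose_conjTranspose, (isHermitian_conjTranspose_mul_self F).eq, Matrix.mul_assoc]

lemma isHermitian_projPerp (F : Matrix n m ℂ) : (projPerp F).IsHermitian :=
  isHermitian_one.sub (isHermitian_proj F)

lemma proj_mul_self {F : Matrix n m ℂ} (hF : Function.Injective F.mulVec) :
    proj F * F = F := by
  have hG := (isUnit_iff_isUnit_det _).mp (PosDef.conjTranspose_mul_self F hF).isUnit
  rw [proj, Matrix.mul_assoc, Matrix.mul_assoc, Matrix.nonsing_inv_mul _ hG, Matrix.mul_one]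

lemma projPerp_mul_self {F : Matrix n m ℂ} (hF : Function.Injective F.mulVec) :
    projPerp F * F = 0 := by
  rw [projPerp, Matrix.sub_mul, Matrix.one_mul, proj_mul_self hF, sub_self]

lemma projPerp_mul_projPerp {F : Matrix n m ℂ} (hF : Function.Injective F.mulVec) :
    projPerp F * projPerp F = projPerp F := by
  rw [projPerp, Matrix.mul_sub, Matrix.mul_one, ← projPerp, proj, ← Matrix.mul_assoc,
    ← Matrix.mul_assoc, projPerp_mul_self hF, Matrix.zero_mul, Matrix.zero_mul, sub_zero]

lemma conjTranspose_mul_projPerp_mul {q : Type*} {X₀ : Matrix n m ℂ}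
    (hX₀ : Function.Injective X₀.mulVec) (B : Matrix n q ℂ) : X₀ᴴ * (projPerp X₀ * B) = 0 := by
  rw [← Matrix.mul_assoc, ← (isHermitian_projPerp X₀).eq, ← conjTranspose_mul,
    projPerp_mul_self hX₀, conjTranspose_zero, Matrix.zero_mul]

lemma posDef_one_add_projPerp_mul_mul_projPerp (F : Matrix n m ℂ) {Q : Matrix n n ℂ}
    (hQ : Q.PosSemidef) : (1 + projPerp F * Q * projPerp F).PosDef := by
  refine PosDef.one.add_posSemidef ?_
  simpa only [(isHermitian_projPerp F).eq] using hQ.conjTranspose_mul_mul_same (projPerp F)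

lemma one_add_projPerp_mul_mul_projPerp_mul_self {F : Matrix n m ℂ}
    (hF : Function.Injective F.mulVec) (Q : Matrix n n ℂ) :
    (1 + projPerp F * Q * projPerp F) * F = F := by
  rw [Matrix.add_mul, Matrix.one_mul, Matrix.mul_assoc, projPerp_mul_self hF, Matrix.mul_zero,
    add_zero]

lemma proj_mul_of_isUnit (F : Matrix n m ℂ) {V : Matrix m m ℂ} (hV : IsUnit V.det) :
    proj (F * V) = proj F := by
  have hVi : V * V⁻¹ = 1 := Matrix.mul_nonsing_inv V hV
  have hVi' : (V⁻¹)ᴴ * Vᴴ = 1 := by rw [← conjTranspose_mul, hVi, conjTranspose_one]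
  rw [proj, proj, conjTranspose_mul, show Vᴴ * Fᴴ * (F * V) = Vᴴ * (Fᴴ * F) * V by
    simp only [Matrix.mul_assoc], Matrix.mul_inv_rev, Matrix.mul_inv_rev,
    ← conjTranspose_nonsing_inv]
  calc F * V * (V⁻¹ * ((Fᴴ * F)⁻¹ * (V⁻¹)ᴴ)) * (Vᴴ * Fᴴ)
      = F * (V * V⁻¹) * (Fᴴ * F)⁻¹ * ((V⁻¹)ᴴ * Vᴴ) * Fᴴ := by simp only [Matrix.mul_assoc]
    _ = F * (Fᴴ * F)⁻¹ * Fᴴ := by rw [hVi, hVi', Matrix.mul_one, Matrix.mul_one]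

lemma proj_submatrix_equiv {p : Type*} [Fintype p] [DecidableEq p] (F : Matrix n m ℂ)
    (e : p ≃ m) : proj (F.submatrix id e) = proj F := by
  rw [proj, proj, conjTranspose_submatrix,
    ← submatrix_mul _ _ _ id _ Function.bijective_id, Matrix.inv_submatrix_equiv]
  simp only [submatrix_mul_equiv, submatrix_id_id]

end Projection

section Blocks

variable {n p q : Type*} [Fintype n] [DecidableEq n] [Fintype p] [DecidableEq p]
  [Fintype q] [DecidableEq q]

lemma proj_fromCols_of_orthogonal {X₀ : Matrix n p ℂ} {Y : Matrix n q ℂ}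
    (h : Function.Injective (fromCols X₀ Y).mulVec) (hXY : X₀ᴴ * Y = 0) :
    proj (fromCols X₀ Y) = proj X₀ + proj Y := by
  have hYX : Yᴴ * X₀ = 0 := by
    rw [← conjTranspose_conjTranspose X₀, ← conjTranspose_mul, hXY, conjTranspose_zero]
  have h₀ := (PosDef.conjTranspose_mul_self X₀ (injective_mulVec_of_fromCols_left h)).isUnit
  have h₁ := (PosDef.conjTranspose_mul_self Y (injective_mulVec_of_fromCols_right h)).isUnit
  rw [proj, conjTranspose_fromCols_eq_fromRows_conjTranspose, fromRows_mul_fromCols, hXY, hYX,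
    inv_fromBlocks_zero₂₁_of_isUnit_iff _ _ _ (iff_of_true h₀ h₁)]
  simp [fromCols_mul_fromBlocks, fromCols_mul_fromRows, proj]

lemma proj_fromCols_sub_proj {X₀ : Matrix n p ℂ} {B : Matrix n q ℂ}
    (h : Function.Injective (fromCols X₀ B).mulVec) :
    proj (fromCols X₀ B) - proj X₀ = proj (projPerp X₀ * B) := by
  have hX₀ := injective_mulVec_of_fromCols_left h
  set U : Matrix (p ⊕ q) (p ⊕ q) ℂ := fromBlocks 1 (-((X₀ᴴ * X₀)⁻¹ * X₀ᴴ * B)) 0 1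
  have hU : IsUnit U.det := by simp [U]
  have hXU : fromCols X₀ B * U = fromCols X₀ (projPerp X₀ * B) := by
    simp [U, fromCols_mul_fromBlocks, projPerp, proj, Matrix.sub_mul, Matrix.mul_assoc,
      neg_add_eq_sub]
  have hinj : Function.Injective (fromCols X₀ (projPerp X₀ * B)).mulVec := by
    rw [← hXU]
    intro v w hvw
    simp only [← mulVec_mulVec] at hvw
    exact mulVec_injective_of_isUnit ((isUnit_iff_isUnit_det U).mpr hU) (h hvw)
  rw [← proj_mul_of_isUnit _ hU, hXU,
    proj_fromCols_of_orthogonal hinj (conjTranspose_mul_projPerp_mul hX₀ B), add_sub_cancel_left]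

lemma toBlocks₂₂_inv_conjTranspose_fromCols_mul_self {X₀ : Matrix n p ℂ} {B : Matrix n q ℂ}
    (h : Function.Injective (fromCols X₀ B).mulVec) :
    ((fromCols X₀ B)ᴴ * fromCols X₀ B)⁻¹.toBlocks₂₂ =
      ((projPerp X₀ * B)ᴴ * (projPerp X₀ * B))⁻¹ := by
  have hX₀ := injective_mulVec_of_fromCols_left h
  have hG := (PosDef.conjTranspose_mul_self _ h).isUnit
  rw [conjTranspose_fromCols_eq_fromRows_conjTranspose, fromRows_mul_fromCols] at hG ⊢
  let := (PosDef.conjTranspose_mul_self _ hX₀).isUnit.invertible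
  let := hG.invertible
  let := invertibleOfFromBlocks₁₁Invertible (X₀ᴴ * X₀) (X₀ᴴ * B) (Bᴴ * X₀) (Bᴴ * B)
  have hSchur : Bᴴ * B - Bᴴ * X₀ * ⅟(X₀ᴴ * X₀) * (X₀ᴴ * B) =
      (projPerp X₀ * B)ᴴ * (projPerp X₀ * B) := by
    symm
    calc (projPerp X₀ * B)ᴴ * (projPerp X₀ * B) = Bᴴ * (projPerp X₀ * projPerp X₀) * B := by
          rw [conjTranspose_mul, (isHermitian_projPerp X₀).eq]; simp only [Matrix.mul_assoc]
      _ = Bᴴ * B - Bᴴ * X₀ * ⅟(X₀ᴴ * X₀) * (X₀ᴴ * B) := by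
          rw [projPerp_mul_projPerp hX₀]
          simp only [projPerp, proj, invOf_eq_nonsing_inv, Matrix.mul_sub, Matrix.sub_mul,
            Matrix.mul_one, Matrix.mul_assoc]
  rw [← invOf_eq_nonsing_inv, invOf_fromBlocks₁₁_eq, toBlocks_fromBlocks₂₂, invOf_eq_nonsing_inv,
    hSchur]

lemma projPerp_mul_toBlocks₂₂_inv_mul_projPerp {X₀ : Matrix n p ℂ} {B : Matrix n q ℂ}
    (h : Function.Injective (fromCols X₀ B).mulVec) :
    projPerp X₀ * B * ((fromCols X₀ B)ᴴ * fromCols X₀ B)⁻¹.toBlocks₂₂ * Bᴴ * projPerp X₀ =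
      proj (fromCols X₀ B) - proj X₀ := by
  rw [toBlocks₂₂_inv_conjTranspose_fromCols_mul_self h, proj_fromCols_sub_proj h, proj,
    conjTranspose_mul, (isHermitian_projPerp X₀).eq]
  simp only [Matrix.mul_assoc]

end Blocks

lemma projPerp_mul_inv_submatrix_natAdd_mul_projPerp {n : Type*} [Fintype n] [DecidableEq n]
    {t r : ℕ} {F : Matrix n (Fin (t + r)) ℂ} (hF : Function.Injective F.mulVec) :
    projPerp (F.submatrix id (Fin.castAdd r)) * F.submatrix id (Fin.natAdd t) *
        (Fᴴ * F)⁻¹.submatrix (Fin.natAdd t) (Fin.natAdd t) * (F.submatrix id (Fin.natAdd t))ᴴ *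
        projPerp (F.submatrix id (Fin.castAdd r)) =
      proj F - proj (F.submatrix id (Fin.castAdd r)) := by
  have hX : fromCols (F.submatrix id (Fin.castAdd r)) (F.submatrix id (Fin.natAdd t)) =
      F.submatrix id finSumFinEquiv := by
    ext i (j | j) <;> simp
  have hinj := hX ▸ injective_mulVec_submatrix finSumFinEquiv hF
  have hG : ((F.submatrix id finSumFinEquiv)ᴴ * F.submatrix id finSumFinEquiv)⁻¹ =
      (Fᴴ * F)⁻¹.submatrix finSumFinEquiv finSumFinEquiv := by
    rw [conjTranspose_submatrix, ← submatrix_mul _ _ _ id _ Function.bijective_id,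
      inv_submatrix_equiv]
  rw [← proj_submatrix_equiv F finSumFinEquiv, ← hX,
    ← projPerp_mul_toBlocks₂₂_inv_mul_projPerp hinj, hX, hG]
  congr 3

theorem wald_equals_two_step_glr_general
    (N K M t r : ℕ) (hK : 0 < K)
    (hJ : t + r ≤ N)
    (Sc : Matrix (Fin N) (Fin N) ℂ) (hS : Sc.PosDef)
    (Z : Matrix (Fin N) (Fin K) ℂ) :
    -- `E_t` : first `t` columns of `I_N`
    let Et : Matrix (Fin N) (Fin t) ℂ := Matrix.of fun i j => if (i : ℕ) = (j : ℕ) then 1 else 0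
    -- `E_r` : columns `t+1, …, t+r` of `I_N`
    let Er : Matrix (Fin N) (Fin r) ℂ :=
      Matrix.of fun i j => if (i : ℕ) = t + (j : ℕ) then 1 else 0
    -- `A = [E_t E_r]` : first `t + r` columns of `I_N`
    let A : Matrix (Fin N) (Fin (t + r)) ℂ :=
      Matrix.of fun i j => if (i : ℕ) = (j : ℕ) then 1 else 0
    let C : Matrix (Fin M) (Fin K) ℂ := Matrix.of fun i j => if (i : ℕ) = (j : ℕ) then 1 else 0
    let PC : Matrix (Fin K) (Fin K) ℂ := Cᴴ * (C * Cᴴ)⁻¹ * C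
    let Shalf : Matrix (Fin N) (Fin N) ℂ := posSemidefSqrt hS.posSemidef
    let ZW1 : Matrix (Fin N) (Fin K) ℂ := Shalf⁻¹ * Z
    let A1 : Matrix (Fin N) (Fin (t + r)) ℂ := Shalf⁻¹ * A
    let A0 : Matrix (Fin N) (Fin t) ℂ := Shalf⁻¹ * Et
    let R1 : Matrix (Fin N) (Fin N) ℂ :=
      ((K : ℂ))⁻¹ • (Sc + Shalf * projPerp A1 * ZW1 * PC * ZW1ᴴ * projPerp A1 * Shalf)
    let Γhat : Matrix (Fin (t + r)) (Fin (t + r)) ℂ := (Aᴴ * R1⁻¹ * A)⁻¹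
    -- lower-right `r × r` block of `Γ̂¹`
    let Γ22 : Matrix (Fin r) (Fin r) ℂ := Γhat.submatrix (Fin.natAdd t) (Fin.natAdd t)
    R1.PosDef ∧
      (K : ℂ) • (projPerp A0 * (Shalf⁻¹ * Er * Γ22 * Erᴴ * Shalf⁻¹) * projPerp A0) =
        proj A1 - proj A0 ∧
      (ZW1ᴴ * ((K : ℂ) • (projPerp A0 * (Shalf⁻¹ * Er * Γ22 * Erᴴ * Shalf⁻¹) * projPerp A0)) *
          ZW1 * PC).trace =
        (ZW1ᴴ * (proj A1 - proj A0) * ZW1 * PC).trace := by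
  intro Et Er A C PC Shalf ZW1 A1 A0 R1 Γhat Γ22
  have hK0 : (K : ℂ) ≠ 0 := Nat.cast_ne_zero.mpr hK.ne'
  have hSq : Shalf * Shalf = Sc := posSemidefSqrt_mul_self hS.posSemidef
  have hSH : Shalf.IsHermitian := isHermitian_posSemidefSqrt hS.posSemidef
  have hSu : IsUnit Shalf := isUnit_of_mul_isUnit_left (hSq ▸ hS.isUnit)
  have hA1 : Function.Injective A1.mulVec := fun v w h => injective_mulVec_of_val_eq_val hJ
    (mulVec_injective_of_isUnit (isUnit_nonsing_inv_iff.mpr hSu) (by simpa [A1] using h))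
  have hPC : PC.PosSemidef :=
    (posSemidef_self_mul_conjTranspose C).inv.conjTranspose_mul_mul_same C
  set W := 1 + projPerp A1 * (ZW1 * PC * ZW1ᴴ) * projPerp A1
  have hW : W.PosDef :=
    posDef_one_add_projPerp_mul_mul_projPerp A1 (hPC.mul_mul_conjTranspose_same ZW1)
  have hR1 : R1 = (K : ℂ)⁻¹ • (Shalf * W * Shalf) := by
    simp only [R1, W, ← hSq, Matrix.mul_add, Matrix.add_mul, Matrix.mul_one, Matrix.mul_assoc]
  have hR1pos : R1.PosDef := hR1 ▸ (hW.mul_mul_of_isHermitian hSH hSu).smul (by simpa using hK)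
  have hΓ22 : Γ22 = (K : ℂ)⁻¹ • (A1ᴴ * A1)⁻¹.submatrix (Fin.natAdd t) (Fin.natAdd t) := by
    rw [show Γ22 = (Aᴴ * R1⁻¹ * A)⁻¹.submatrix _ _ from rfl, hR1,
      inv_smul_of_ne_zero (inv_ne_zero hK0), inv_inv, Matrix.mul_smul, Matrix.smul_mul,
      conjTranspose_mul_inv_conj_mul_of_mul_eq hSH ((isUnit_iff_isUnit_det _).mp hW.isUnit)
        (one_add_projPerp_mul_mul_projPerp_mul_self hA1 _), inv_smul_of_ne_zero hK0]
    rfl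
  have hA0 : A1.submatrix id (Fin.castAdd r) = A0 := by ext; simp [A1, A0, A, Et, mul_apply]
  have hB : A1.submatrix id (Fin.natAdd t) = Shalf⁻¹ * Er := by ext; simp [A1, A, Er, mul_apply]
  have key : (K : ℂ) • (projPerp A0 * (Shalf⁻¹ * Er * Γ22 * Erᴴ * Shalf⁻¹) * projPerp A0) =
      proj A1 - proj A0 := by
    rw [← hA0, ← projPerp_mul_inv_submatrix_natAdd_mul_projPerp hA1, hB, hΓ22,
      conjTranspose_mul Shalf⁻¹ Er, hSH.inv.eq]
    simp only [Matrix.mul_smul, Matrix.smul_mul, smul_smul, mul_inv_cancel₀ hK0, one_smul,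
      Matrix.mul_assoc]
  exact ⟨hR1pos, key, by rw [key]⟩

/-- Statistical equivalence of the Wald test and the 2S-GLRT in the I-GMANOVA model:
`K P_{A₀}^⊥ S_c^{-1/2} E_r Γ̂₂₂¹ E_rᴴ S_c^{-1/2} P_{A₀}^⊥ = P_{A₁} − P_{A₀}`, hence the Wald
statistic equals the two-step GLR statistic `Tr[Z_{W1}ᴴ (P_{A₁} − P_{A₀}) Z_{W1} P_{C†}]`. -/
theorem wald_equals_two_step_glr
    (N K M t r : ℕ) (hN : 0 < N) (hK : 0 < K) (hM : 0 < M) (ht : 0 < t) (hr : 0 < r)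
    (hJ : t + r ≤ N) (hMK : M ≤ K)
    (Sc : Matrix (Fin N) (Fin N) ℂ) (hS : Sc.PosDef)
    (Z : Matrix (Fin N) (Fin K) ℂ) :
    -- `E_t` : first `t` columns of `I_N`
    let Et : Matrix (Fin N) (Fin t) ℂ := Matrix.of fun i j => if (i : ℕ) = (j : ℕ) then 1 else 0
    -- `E_r` : columns `t+1, …, t+r` of `I_N`
    let Er : Matrix (Fin N) (Fin r) ℂ :=
      Matrix.of fun i j => if (i : ℕ) = t + (j : ℕ) then 1 else 0
    -- `A = [E_t E_r]` : first `t + r` columns of `I_N`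
    let A : Matrix (Fin N) (Fin (t + r)) ℂ :=
      Matrix.of fun i j => if (i : ℕ) = (j : ℕ) then 1 else 0
    let C : Matrix (Fin M) (Fin K) ℂ := Matrix.of fun i j => if (i : ℕ) = (j : ℕ) then 1 else 0
    let PC : Matrix (Fin K) (Fin K) ℂ := Cᴴ * (C * Cᴴ)⁻¹ * C
    let Shalf : Matrix (Fin N) (Fin N) ℂ := posSemidefSqrt hS.posSemidef
    let ZW1 : Matrix (Fin N) (Fin K) ℂ := Shalf⁻¹ * Z
    let A1 : Matrix (Fin N) (Fin (t + r)) ℂ := Shalf⁻¹ * A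
    let A0 : Matrix (Fin N) (Fin t) ℂ := Shalf⁻¹ * Et
    let R1 : Matrix (Fin N) (Fin N) ℂ :=
      ((K : ℂ))⁻¹ • (Sc + Shalf * projPerp A1 * ZW1 * PC * ZW1ᴴ * projPerp A1 * Shalf)
    let Γhat : Matrix (Fin (t + r)) (Fin (t + r)) ℂ := (Aᴴ * R1⁻¹ * A)⁻¹
    -- lower-right `r × r` block of `Γ̂¹`
    let Γ22 : Matrix (Fin r) (Fin r) ℂ := Γhat.submatrix (Fin.natAdd t) (Fin.natAdd t)
    R1.PosDef ∧
      (K : ℂ) • (projPerp A0 * (Shalf⁻¹ * Er * Γ22 * Erᴴ * Shalf⁻¹) * projPerp A0) =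
        proj A1 - proj A0 ∧
      (ZW1ᴴ * ((K : ℂ) • (projPerp A0 * (Shalf⁻¹ * Er * Γ22 * Erᴴ * Shalf⁻¹) * projPerp A0)) *
          ZW1 * PC).trace =
        (ZW1ᴴ * (proj A1 - proj A0) * ZW1 * PC).trace :=
  wald_equals_two_step_glr_general N K M t r hK hJ Sc hS Z
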